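/- Let L be a symmetric n×n interaction matrix with zero diagonal satisfying the Dobrushin-like condition ‖|L|‖_2 < 1, where |L| is the entrywise absolute value. Let a ∈ (ℝ^+)^n and let f : Ω → ℝ be a-Lipschitz, i.e., |f(x)−f(y)| ≤ Σ_i a_i 1{x^i≠y^i}. Then for any other symmetric zero-diagonal interaction matrix M, |E_{π_L} f − E_{π_M} f| ≤ (‖a‖_2 √n / (2(1−‖|L|‖_2))) · ‖L − M‖_2. -/

import Mathlib

/-!
Let `P` be the Glauber (heat-bath) operator of `π_L` and `osc h i = max_x |Δ_i h (x)|`. Flipping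
spin `j` moves the conditional law of spin `i` by at most `|L i j|`, so
`osc (P h) ≤ (1 - 1/n) osc h + (1/n) |L| osc h` coordinatewise, and `P` contracts `‖osc h‖₂` by
`ρ = 1 - (1 - ‖|L|‖₂)/n`; in particular `E_ν[P^k f] → E_{π_L} f`. Since `π_M` is stationary for
its own Glauber operator `P_M`, `E_{π_M}[h - P h] = E_{π_M}[(P_M - P) h]`, and the conditional
laws of `π_M` and `π_L` differ at `x` by at most `|((L - M) σ(x))_i| / 2`; Cauchy–Schwarz bounds
this step by `√n ‖L - M‖₂ ‖osc h‖₂ / (2n)`. Summing over `h = P^k f`, with `‖osc f‖₂ ≤ ‖a‖₂`,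
gives `√n ‖L - M‖₂ ‖a‖₂ / (2n (1 - ρ))`, which is the claimed bound.
-/

open Finset
open scoped Matrix

/-- Spin value ±1 of a Boolean coordinate. -/
noncomputable def spin (b : Bool) : ℝ := if b then 1 else -1

/-- Configuration `x` with coordinate `i` set to `+1`. -/
noncomputable def up {n : ℕ} (x : Fin n → Bool) (i : Fin n) : Fin n → Bool :=
  Function.update x i true

/-- Configuration `x` with coordinate `i` set to `-1`. -/
noncomputable def dn {n : ℕ} (x : Fin n → Bool) (i : Fin n) : Fin n → Bool :=
  Function.update x i false

/-- Conditional probability `μ_i(1 | x^{(∼i)})`. -/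
noncomputable def condProb {n : ℕ} (μ : (Fin n → Bool) → ℝ) (x : Fin n → Bool) (i : Fin n) : ℝ :=
  μ (up x i) / (μ (up x i) + μ (dn x i))

/-- Glauber dynamics kernel of `μ`, acting on functions. -/
noncomputable def glauberOp {n : ℕ} (μ : (Fin n → Bool) → ℝ) (h : (Fin n → Bool) → ℝ)
    (x : Fin n → Bool) : ℝ :=
  (1 / n) * ∑ i, (condProb μ x i * h (up x i) + (1 - condProb μ x i) * h (dn x i))

/-- Discrete derivative `Δ_i(h)(x) = h(x^{(i,+)}) - h(x^{(i,-)})`. -/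
noncomputable def disc {n : ℕ} (i : Fin n) (h : (Fin n → Bool) → ℝ) (x : Fin n → Bool) : ℝ :=
  h (up x i) - h (dn x i)

/-- The ±1 spin vector associated to a Boolean configuration. -/
noncomputable def sigmaVec {n : ℕ} (x : Fin n → Bool) : Fin n → ℝ := fun i => spin (x i)

/-- The Ising model with interaction matrix `J`: `π_J(x) ∝ exp((1/2) xᵀ J x)`. -/
noncomputable def ising {n : ℕ} (J : Matrix (Fin n) (Fin n) ℝ) (x : Fin n → Bool) : ℝ :=
  Real.exp ((1 / 2) * (sigmaVec x ⬝ᵥ J.mulVec (sigmaVec x))) /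
    ∑ y, Real.exp ((1 / 2) * (sigmaVec y ⬝ᵥ J.mulVec (sigmaVec y)))

/-- Spectral (ℓ²-operator) norm of a real square matrix. -/
noncomputable def specNorm {n : ℕ} (M : Matrix (Fin n) (Fin n) ℝ) : ℝ :=
  ‖(Matrix.toEuclideanCLM (𝕜 := ℝ) M : EuclideanSpace ℝ (Fin n) →L[ℝ] EuclideanSpace ℝ (Fin n))‖

/-- Expectation of `f` under the probability mass function `μ`. -/
noncomputable def expect {n : ℕ} (μ : (Fin n → Bool) → ℝ) (f : (Fin n → Bool) → ℝ) : ℝ :=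
  ∑ x, μ x * f x

/-- Entrywise absolute value of a matrix. -/
noncomputable def absMat {n : ℕ} (L : Matrix (Fin n) (Fin n) ℝ) : Matrix (Fin n) (Fin n) ℝ :=
  Matrix.of fun i j => |L i j|

open Filter Topology

section Flips
variable {n : ℕ}

@[simp] lemma up_up (x : Fin n → Bool) (i : Fin n) : up (up x i) i = up x i :=
  Function.update_idem _ _ _
@[simp] lemma dn_up (x : Fin n → Bool) (i : Fin n) : dn (up x i) i = dn x i :=
  Function.update_idem _ _ _
@[simp] lemma up_dn (x : Fin n → Bool) (i : Fin n) : up (dn x i) i = up x i :=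
  Function.update_idem _ _ _
@[simp] lemma dn_dn (x : Fin n → Bool) (i : Fin n) : dn (dn x i) i = dn x i :=
  Function.update_idem _ _ _

lemma up_up_comm (x : Fin n → Bool) {i j : Fin n} (h : i ≠ j) : up (up x i) j = up (up x j) i :=
  Function.update_comm h _ _ _
lemma dn_up_comm (x : Fin n → Bool) {i j : Fin n} (h : i ≠ j) : dn (up x i) j = up (dn x j) i :=
  Function.update_comm h _ _ _
lemma dn_dn_comm (x : Fin n → Bool) {i j : Fin n} (h : i ≠ j) : dn (dn x i) j = dn (dn x j) i :=
  Function.update_comm h _ _ _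

lemma sum_up_add_sum_dn (i : Fin n) (G : (Fin n → Bool) → ℝ) :
    ∑ x, G (up x i) + ∑ x, G (dn x i) = 2 * ∑ x, G x := by
  have hflip : Function.Involutive fun x : Fin n → Bool => Function.update x i (!x i) :=
    fun x => by simp
  have hpair : ∀ x, G (up x i) + G (dn x i) = G x + G (Function.update x i (!x i)) := by
    intro x
    cases hx : x i
    · rw [show dn x i = x by simp [dn, ← hx], add_comm]; rfl
    · rw [show up x i = x by simp [up, ← hx]]; rfl
  rw [← Finset.sum_add_distrib, Finset.sum_congr rfl fun x _ => hpair x, Finset.sum_add_distrib,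
    two_mul]
  congr 1
  exact Equiv.sum_comp (hflip.toPerm _) G

end Flips

section HeatBath
variable {n : ℕ} (μ : (Fin n → Bool) → ℝ)

noncomputable def heatBath (i : Fin n) (h : (Fin n → Bool) → ℝ) (x : Fin n → Bool) : ℝ :=
  condProb μ x i * h (up x i) + (1 - condProb μ x i) * h (dn x i)

lemma glauberOp_eq_sum_heatBath (h : (Fin n → Bool) → ℝ) (x : Fin n → Bool) :
    glauberOp μ h x = (1 / n) * ∑ i, heatBath μ i h x :=
  rfl

@[simp] lemma condProb_up (x : Fin n → Bool) (i : Fin n) :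
    condProb μ (up x i) i = condProb μ x i := by
  simp [condProb]

@[simp] lemma condProb_dn (x : Fin n → Bool) (i : Fin n) :
    condProb μ (dn x i) i = condProb μ x i := by
  simp [condProb]

@[simp] lemma heatBath_up (i : Fin n) (h : (Fin n → Bool) → ℝ) (x : Fin n → Bool) :
    heatBath μ i h (up x i) = heatBath μ i h x := by
  simp [heatBath]

@[simp] lemma heatBath_dn (i : Fin n) (h : (Fin n → Bool) → ℝ) (x : Fin n → Bool) :
    heatBath μ i h (dn x i) = heatBath μ i h x := by
  simp [heatBath]

lemma disc_heatBath_self (i : Fin n) (h : (Fin n → Bool) → ℝ) (x : Fin n → Bool) :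
    disc i (heatBath μ i h) x = 0 := by
  simp [disc]

lemma heatBath_sub_heatBath (ν : (Fin n → Bool) → ℝ) (i : Fin n) (h : (Fin n → Bool) → ℝ)
    (x : Fin n → Bool) :
    heatBath ν i h x - heatBath μ i h x = (condProb ν x i - condProb μ x i) * disc i h x := by
  simp only [heatBath, disc]
  ring

variable {μ} (hμ : ∀ x, 0 < μ x)
include hμ

lemma condProb_nonneg (x : Fin n → Bool) (i : Fin n) : 0 ≤ condProb μ x i :=
  div_nonneg (hμ _).le (add_pos (hμ _) (hμ _)).le

lemma condProb_le_one (x : Fin n → Bool) (i : Fin n) : condProb μ x i ≤ 1 :=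
  div_le_one_of_le₀ (le_add_of_nonneg_right (hμ _).le) (add_pos (hμ _) (hμ _)).le

lemma expect_heatBath (i : Fin n) (h : (Fin n → Bool) → ℝ) :
    expect μ (heatBath μ i h) = expect μ h := by
  have hpair : ∀ x, μ (up x i) * heatBath μ i h x + μ (dn x i) * heatBath μ i h x
      = μ (up x i) * h (up x i) + μ (dn x i) * h (dn x i) := by
    intro x
    have hZ : μ (up x i) + μ (dn x i) ≠ 0 := (add_pos (hμ _) (hμ _)).ne'
    simp only [heatBath, condProb]
    field_simp
    ring
  have h1 := sum_up_add_sum_dn i fun x => μ x * heatBath μ i h x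
  have h2 := sum_up_add_sum_dn i fun x => μ x * h x
  simp only [heatBath_up, heatBath_dn, ← Finset.sum_add_distrib, hpair] at h1
  simp only [← Finset.sum_add_distrib] at h2
  simp only [_root_.expect]
  linarith

lemma expect_glauberOp (hn : 0 < n) (h : (Fin n → Bool) → ℝ) :
    expect μ (glauberOp μ h) = expect μ h := by
  have hsite : ∀ i, ∑ x, μ x * heatBath μ i h x = ∑ x, μ x * h x :=
    fun i => expect_heatBath hμ i h
  simp only [_root_.expect, glauberOp_eq_sum_heatBath, Finset.mul_sum, mul_left_comm (μ _)]
  rw [Finset.sum_comm]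
  simp only [← Finset.mul_sum, hsite]
  simp
  field_simp

lemma expect_iterate_glauberOp (hn : 0 < n) (h : (Fin n → Bool) → ℝ) (k : ℕ) :
    expect μ ((glauberOp μ)^[k] h) = expect μ h := by
  induction k with
  | zero => rfl
  | succ k ih => rw [Function.iterate_succ_apply', expect_glauberOp hμ hn, ih]

end HeatBath

section Expectation
variable {n : ℕ} {μ : (Fin n → Bool) → ℝ} (hμ : ∀ x, 0 ≤ μ x) (hμ1 : ∑ x, μ x = 1)
include hμ hμ1

lemma abs_expect_sub_expect_le {g g' : (Fin n → Bool) → ℝ} {B : ℝ}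
    (hB : ∀ x, |g x - g' x| ≤ B) : |expect μ g - expect μ g'| ≤ B :=
  calc |expect μ g - expect μ g'| = |∑ x, μ x * (g x - g' x)| := by
        simp only [_root_.expect, mul_sub, Finset.sum_sub_distrib]
    _ ≤ ∑ x, μ x * |g x - g' x| := by
        refine (Finset.abs_sum_le_sum_abs _ _).trans_eq (Finset.sum_congr rfl fun x _ => ?_)
        rw [abs_mul, abs_of_nonneg (hμ x)]
    _ ≤ ∑ x, μ x * B := Finset.sum_le_sum fun x _ => mul_le_mul_of_nonneg_left (hB x) (hμ x)
    _ = B := by rw [← Finset.sum_mul, hμ1, one_mul]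

lemma abs_expect_sub_le {g : (Fin n → Bool) → ℝ} {c B : ℝ} (hB : ∀ x, |g x - c| ≤ B) :
    |expect μ g - c| ≤ B := by
  have hconst : expect μ (fun _ => c) = c := by simp [_root_.expect, ← Finset.sum_mul, hμ1]
  simpa [hconst] using abs_expect_sub_expect_le hμ hμ1 (g' := fun _ => c) hB

lemma abs_expect_sub_expect_le_of_oscillation {ν : (Fin n → Bool) → ℝ} (hν : ∀ x, 0 ≤ ν x)
    (hν1 : ∑ x, ν x = 1) {g : (Fin n → Bool) → ℝ} {B : ℝ} (hB : ∀ x y, |g x - g y| ≤ B) :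
    |expect μ g - expect ν g| ≤ B :=
  abs_expect_sub_le hμ hμ1 fun x => by
    rw [abs_sub_comm]; exact abs_expect_sub_le hν hν1 fun y => by rw [abs_sub_comm]; exact hB x y

end Expectation

lemma ising_pos {n : ℕ} (J : Matrix (Fin n) (Fin n) ℝ) (x : Fin n → Bool) : 0 < ising J x :=
  div_pos (Real.exp_pos _) (Finset.sum_pos (fun _ _ => Real.exp_pos _) Finset.univ_nonempty)

lemma sum_ising {n : ℕ} (J : Matrix (Fin n) (Fin n) ℝ) : ∑ x, ising J x = 1 := by
  have hZ := Finset.sum_pos (fun y _ => Real.exp_pos ((1 / 2) * (sigmaVec y ⬝ᵥ J *ᵥ sigmaVec y)))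
    (Finset.univ_nonempty (α := Fin n → Bool))
  simp only [ising]
  rw [← Finset.sum_div, div_self hZ.ne']

lemma lipschitzWith_sigmoid : LipschitzWith (1 / 4) Real.sigmoid := by
  refine lipschitzWith_of_nnnorm_deriv_le differentiable_sigmoid fun x => ?_
  rw [Real.deriv_sigmoid, ← NNReal.coe_le_coe, coe_nnnorm, Real.norm_eq_abs,
    abs_of_nonneg (mul_nonneg (Real.sigmoid_nonneg x) (sub_nonneg.2 (Real.sigmoid_le_one x)))]
  push_cast
  nlinarith [sq_nonneg (Real.sigmoid x - 1 / 2)]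

lemma abs_sigmoid_sub_le (s t : ℝ) : |Real.sigmoid s - Real.sigmoid t| ≤ |s - t| / 4 := by
  simpa [Real.dist_eq, div_eq_inv_mul] using lipschitzWith_sigmoid.dist_le_mul s t

section IsingConditional
variable {n : ℕ}

lemma sigmaVec_up (x : Fin n → Bool) (i : Fin n) :
    sigmaVec (up x i) = Function.update (sigmaVec x) i 1 :=
  Function.comp_update spin x i true

lemma sigmaVec_dn (x : Fin n → Bool) (i : Fin n) :
    sigmaVec (dn x i) = Function.update (sigmaVec x) i (-1) :=
  Function.comp_update spin x i false

lemma update_eq_add_smul_single (s : Fin n → ℝ) (i : Fin n) (c : ℝ) :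
    Function.update s i c = s + (c - s i) • Pi.single i 1 := by
  ext j
  rcases eq_or_ne j i with rfl | hj <;> simp [*]

lemma mulVec_update_sub_mulVec_update (J : Matrix (Fin n) (Fin n) ℝ) (s : Fin n → ℝ)
    (i j : Fin n) (c d : ℝ) :
    (J *ᵥ Function.update s j c) i - (J *ᵥ Function.update s j d) i = (c - d) * J i j := by
  simp only [update_eq_add_smul_single, Matrix.mulVec_add, Matrix.mulVec_smul,
    Matrix.mulVec_single_one, Pi.add_apply, Pi.smul_apply, smul_eq_mul, Matrix.col_apply]
  ring

variable {J : Matrix (Fin n) (Fin n) ℝ} (hJ : J.IsSymm) (hJd : ∀ i, J i i = 0)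
include hJ hJd

lemma dotProduct_mulVec_add_smul_single (s : Fin n → ℝ) (i : Fin n) (t : ℝ) :
    (s + t • Pi.single i 1) ⬝ᵥ J *ᵥ (s + t • Pi.single i 1)
      = s ⬝ᵥ J *ᵥ s + 2 * t * (J *ᵥ s) i := by
  have hleft : Pi.single i 1 ⬝ᵥ J *ᵥ s = (J *ᵥ s) i := by rw [single_dotProduct, one_mul]
  have hright : s ⬝ᵥ J *ᵥ Pi.single i 1 = (J *ᵥ s) i := by
    rw [← hleft, ← Matrix.dotProduct_transpose_mulVec, hJ.eq]
  have hdiag : Pi.single i (1 : ℝ) ⬝ᵥ J *ᵥ Pi.single i 1 = 0 := by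
    rw [Matrix.mulVec_single_one, single_dotProduct]
    simp [hJd i]
  simp only [Matrix.mulVec_add, Matrix.mulVec_smul, dotProduct_add, add_dotProduct,
    dotProduct_smul, smul_dotProduct, hleft, hright, hdiag, smul_eq_mul]
  ring

lemma dotProduct_mulVec_update_sub (s : Fin n → ℝ) (i : Fin n) (c d : ℝ) :
    Function.update s i c ⬝ᵥ J *ᵥ Function.update s i c
      - Function.update s i d ⬝ᵥ J *ᵥ Function.update s i d = 2 * (c - d) * (J *ᵥ s) i := by
  rw [update_eq_add_smul_single, update_eq_add_smul_single,
    dotProduct_mulVec_add_smul_single hJ hJd, dotProduct_mulVec_add_smul_single hJ hJd]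
  ring

lemma condProb_ising (x : Fin n → Bool) (i : Fin n) :
    condProb (ising J) x i = Real.sigmoid (2 * (J *ᵥ sigmaVec x) i) := by
  set H : (Fin n → Bool) → ℝ := fun y => (1 / 2) * (sigmaVec y ⬝ᵥ J *ᵥ sigmaVec y)
  have hH : H (up x i) = H (dn x i) + 2 * (J *ᵥ sigmaVec x) i := by
    have := dotProduct_mulVec_update_sub hJ hJd (sigmaVec x) i 1 (-1)
    simp only [H, sigmaVec_up, sigmaVec_dn]
    linarith
  have hZ : 0 < ∑ y, Real.exp (H y) :=
    Finset.sum_pos (fun _ _ => Real.exp_pos _) Finset.univ_nonempty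
  change Real.exp (H (up x i)) / _ / (Real.exp (H (up x i)) / _ + Real.exp (H (dn x i)) / _) = _
  rw [← add_div, div_div_div_cancel_right₀ hZ.ne', hH, Real.exp_add, Real.sigmoid_def,
    Real.exp_neg]
  field_simp

lemma abs_condProb_ising_sub_le {K : Matrix (Fin n) (Fin n) ℝ} (hK : K.IsSymm)
    (hKd : ∀ i, K i i = 0) (x : Fin n → Bool) (i : Fin n) :
    |condProb (ising J) x i - condProb (ising K) x i| ≤ |((J - K) *ᵥ sigmaVec x) i| / 2 := by
  rw [condProb_ising hJ hJd, condProb_ising hK hKd]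
  refine (abs_sigmoid_sub_le _ _).trans_eq ?_
  rw [← mul_sub, abs_mul, Matrix.sub_mulVec, Pi.sub_apply]
  norm_num
  ring

lemma abs_condProb_ising_up_sub_dn_le (x : Fin n → Bool) (i j : Fin n) :
    |condProb (ising J) (up x j) i - condProb (ising J) (dn x j) i| ≤ |J i j| := by
  rw [condProb_ising hJ hJd, condProb_ising hJ hJd, sigmaVec_up, sigmaVec_dn]
  refine (abs_sigmoid_sub_le _ _).trans_eq ?_
  rw [← mul_sub, mulVec_update_sub_mulVec_update]
  norm_num [abs_mul]
  ring

end IsingConditional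

section Oscillation
variable {n : ℕ}

noncomputable def osc (h : (Fin n → Bool) → ℝ) (i : Fin n) : ℝ :=
  Finset.univ.sup' Finset.univ_nonempty fun x => |disc i h x|

lemma abs_disc_le_osc (h : (Fin n → Bool) → ℝ) (i : Fin n) (x : Fin n → Bool) :
    |disc i h x| ≤ osc h i :=
  Finset.le_sup' (fun x => |disc i h x|) (Finset.mem_univ x)

lemma osc_nonneg (h : (Fin n → Bool) → ℝ) (i : Fin n) : 0 ≤ osc h i :=
  (abs_nonneg _).trans (abs_disc_le_osc h i fun _ => true)

lemma osc_le {h : (Fin n → Bool) → ℝ} {i : Fin n} {c : ℝ} (hc : ∀ x, |disc i h x| ≤ c) :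
    osc h i ≤ c :=
  Finset.sup'_le _ _ fun x _ => hc x

lemma abs_sub_update_le_osc (h : (Fin n → Bool) → ℝ) (x : Fin n → Bool) (i : Fin n) (b : Bool) :
    |h x - h (Function.update x i b)| ≤ osc h i := by
  have hdisc := abs_disc_le_osc h i x
  have hpair : ∀ c d : Bool, |h (Function.update x i c) - h (Function.update x i d)| ≤ osc h i := by
    simp only [disc, up, dn] at hdisc
    intro c d
    cases c <;> cases d
    · simpa using osc_nonneg h i
    · rwa [abs_sub_comm]
    · exact hdisc
    · simpa using osc_nonneg h i
  simpa using hpair (x i) b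

lemma abs_sub_le_sum_osc (h : (Fin n → Bool) → ℝ) (x y : Fin n → Bool) :
    |h x - h y| ≤ ∑ i, osc h i := by
  suffices ∀ s : Finset (Fin n), ∀ x, (∀ i ∉ s, x i = y i) → |h x - h y| ≤ ∑ i ∈ s, osc h i from
    this Finset.univ x (by simp)
  intro s
  induction s using Finset.induction_on with
  | empty => intro x hx; simp [funext fun i => hx i (Finset.notMem_empty i)]
  | insert i s hi ih =>
    intro x hx
    have hx' : ∀ j ∉ s, Function.update x i (y i) j = y j := by
      intro j hj
      rcases eq_or_ne j i with rfl | hji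
      · simp
      · simp [hji, hx j (by simp [hji, hj])]
    rw [Finset.sum_insert hi]
    calc |h x - h y| ≤ |h x - h (Function.update x i (y i))|
          + |h (Function.update x i (y i)) - h y| := abs_sub_le _ _ _
      _ ≤ osc h i + ∑ j ∈ s, osc h j := add_le_add (abs_sub_update_le_osc h x i _) (ih _ hx')

lemma osc_le_of_abs_sub_le {f : (Fin n → Bool) → ℝ} {a : Fin n → ℝ}
    (hf : ∀ x y, |f x - f y| ≤ ∑ i, if x i = y i then 0 else a i) (i : Fin n) :
    osc f i ≤ a i :=
  osc_le fun x => (hf _ _).trans_eq <| by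
    rw [Finset.sum_eq_single i (fun j _ hji => by simp [up, dn, hji]) (by simp)]
    simp [up, dn]

end Oscillation

section EuclideanNorm
variable {ι : Type*} [Fintype ι]

noncomputable def l2norm (v : ι → ℝ) : ℝ := ‖WithLp.toLp 2 v‖

lemma l2norm_eq_sqrt (v : ι → ℝ) : l2norm v = √(∑ i, v i ^ 2) := by
  simp [l2norm, EuclideanSpace.norm_eq]

lemma l2norm_nonneg (v : ι → ℝ) : 0 ≤ l2norm v := norm_nonneg _

lemma l2norm_le_l2norm {u w : ι → ℝ} (hu : ∀ i, 0 ≤ u i) (huw : ∀ i, u i ≤ w i) :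
    l2norm u ≤ l2norm w := by
  simp only [l2norm_eq_sqrt]
  gcongr with i
  · exact hu i
  · exact huw i

lemma l2norm_add_le (u w : ι → ℝ) : l2norm (u + w) ≤ l2norm u + l2norm w :=
  norm_add_le (WithLp.toLp 2 u) (WithLp.toLp 2 w)

lemma l2norm_smul (c : ℝ) (u : ι → ℝ) : l2norm (c • u) = |c| * l2norm u :=
  norm_smul c (WithLp.toLp 2 u)

lemma sum_abs_mul_le_l2norm_mul (u w : ι → ℝ) : ∑ i, |u i| * w i ≤ l2norm u * l2norm w :=
  (Real.sum_mul_le_sqrt_mul_sqrt _ _ _).trans_eq (by simp [l2norm_eq_sqrt])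

lemma sum_le_sqrt_card_mul_l2norm (w : ι → ℝ) : ∑ i, w i ≤ √(Fintype.card ι) * l2norm w := by
  simpa [l2norm_eq_sqrt] using Real.sum_mul_le_sqrt_mul_sqrt Finset.univ (fun _ => 1) w

lemma l2norm_mulVec_le {n : ℕ} (M : Matrix (Fin n) (Fin n) ℝ) (v : Fin n → ℝ) :
    l2norm (M *ᵥ v) ≤ specNorm M * l2norm v := by
  simpa [l2norm, specNorm, Matrix.toEuclideanCLM_toLp] using
    (Matrix.toEuclideanCLM (𝕜 := ℝ) M).le_opNorm (WithLp.toLp 2 v)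

lemma l2norm_sigmaVec {n : ℕ} (x : Fin n → Bool) : l2norm (sigmaVec x) = √n := by
  have hsq : ∀ i, sigmaVec x i ^ 2 = 1 := fun i => by cases x i <;> simp [sigmaVec, spin]
  simp [l2norm_eq_sqrt, hsq]

end EuclideanNorm

section Rate
variable {n : ℕ} (L : Matrix (Fin n) (Fin n) ℝ)

noncomputable def glauberRate : ℝ := 1 - (1 - specNorm (absMat L)) / n

lemma glauberRate_nonneg (hn : 0 < n) : 0 ≤ glauberRate L := by
  have hn' : (1 : ℝ) ≤ n := Nat.one_le_cast.2 hn
  have ht : 0 ≤ specNorm (absMat L) := norm_nonneg _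
  rw [glauberRate, sub_nonneg, div_le_one (by positivity)]
  linarith

lemma glauberRate_lt_one (hn : 0 < n) (hDob : specNorm (absMat L) < 1) : glauberRate L < 1 := by
  have : 0 < (1 - specNorm (absMat L)) / n := div_pos (sub_pos.2 hDob) (Nat.cast_pos.2 hn)
  rw [glauberRate]
  linarith

end Rate

section Contraction
variable {n : ℕ} {L : Matrix (Fin n) (Fin n) ℝ} (hL : L.IsSymm) (hLd : ∀ i, L i i = 0)
include hL hLd

lemma abs_disc_heatBath_le (h : (Fin n → Bool) → ℝ) (x : Fin n → Bool) {i j : Fin n}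
    (hij : i ≠ j) : |disc i (heatBath (ising L) j h) x| ≤ osc h i + |L i j| * osc h j := by
  set p := condProb (ising L) (up x i) j
  set q := condProb (ising L) (dn x i) j
  have hp0 : 0 ≤ p := condProb_nonneg (ising_pos L) _ _
  have hp1 : 0 ≤ 1 - p := sub_nonneg.2 (condProb_le_one (ising_pos L) _ _)
  have hpq : |p - q| ≤ |L i j| := by
    simpa [hL.apply i j] using abs_condProb_ising_up_sub_dn_le hL hLd x j i
  have hdecomp : disc i (heatBath (ising L) j h) x
      = p * disc i h (up x j) + (1 - p) * disc i h (dn x j) + (p - q) * disc j h (dn x i) := by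
    simp only [disc, heatBath, p, q]
    rw [up_up_comm x hij, dn_up_comm x hij, dn_dn_comm x hij, ← dn_up_comm x hij.symm]
    ring
  rw [hdecomp]
  calc _ ≤ |p * disc i h (up x j)| + |(1 - p) * disc i h (dn x j)|
        + |(p - q) * disc j h (dn x i)| := abs_add_three _ _ _
    _ ≤ p * osc h i + (1 - p) * osc h i + |L i j| * osc h j := by
        rw [abs_mul, abs_mul, abs_mul, abs_of_nonneg hp0, abs_of_nonneg hp1]
        gcongr
        exacts [abs_disc_le_osc h i _, abs_disc_le_osc h i _, abs_disc_le_osc h j _]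
    _ = osc h i + |L i j| * osc h j := by ring

lemma osc_glauberOp_le (h : (Fin n → Bool) → ℝ) (i : Fin n) :
    osc (glauberOp (ising L) h) i ≤ (1 - 1 / n) * osc h i + 1 / n * (absMat L *ᵥ osc h) i := by
  refine osc_le fun x => ?_
  have hterm : ∀ j, |disc i (heatBath (ising L) j h) x|
      ≤ (if j = i then 0 else osc h i) + |L i j| * osc h j := by
    intro j
    rcases eq_or_ne j i with rfl | hji
    · simpa [disc_heatBath_self] using mul_nonneg (abs_nonneg (L j j)) (osc_nonneg h j)
    · simpa [hji] using abs_disc_heatBath_le hL hLd h x hji.symm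
  have hcount : ∑ j, (if j = i then 0 else osc h i) = (n - 1) * osc h i := by
    simp [Finset.sum_ite, Finset.filter_ne', Nat.cast_pred i.pos]
  calc |disc i (glauberOp (ising L) h) x|
      = 1 / n * |∑ j, disc i (heatBath (ising L) j h) x| := by
        simp only [disc, glauberOp_eq_sum_heatBath, ← mul_sub, ← Finset.sum_sub_distrib, abs_mul]
        simp
    _ ≤ 1 / n * ∑ j, ((if j = i then 0 else osc h i) + |L i j| * osc h j) := by
        gcongr
        exact (Finset.abs_sum_le_sum_abs _ _).trans (Finset.sum_le_sum fun j _ => hterm j)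
    _ = (1 - 1 / n) * osc h i + 1 / n * (absMat L *ᵥ osc h) i := by
        rw [Finset.sum_add_distrib, hcount]
        have : (n : ℝ) ≠ 0 := Nat.cast_ne_zero.2 (Fin.pos i).ne'
        field_simp
        rfl

lemma l2norm_osc_glauberOp_le (hn : 0 < n) (h : (Fin n → Bool) → ℝ) :
    l2norm (osc (glauberOp (ising L) h)) ≤ glauberRate L * l2norm (osc h) := by
  have hn' : (1 : ℝ) ≤ n := Nat.one_le_cast.2 hn
  have hc : 0 ≤ 1 - 1 / (n : ℝ) := sub_nonneg.2 (div_le_one_of_le₀ hn' (by positivity))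
  calc l2norm (osc (glauberOp (ising L) h))
      ≤ l2norm ((1 - 1 / n : ℝ) • osc h + (1 / n : ℝ) • (absMat L *ᵥ osc h)) :=
        l2norm_le_l2norm (osc_nonneg _) (osc_glauberOp_le hL hLd h)
    _ ≤ (1 - 1 / n) * l2norm (osc h) + 1 / n * (specNorm (absMat L) * l2norm (osc h)) := by
        refine (l2norm_add_le _ _).trans ?_
        rw [l2norm_smul, l2norm_smul, abs_of_nonneg hc, abs_of_nonneg (by positivity)]
        gcongr
        exact l2norm_mulVec_le _ _
    _ = glauberRate L * l2norm (osc h) := by rw [glauberRate]; ring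

lemma l2norm_osc_iterate_glauberOp_le (hn : 0 < n) (h : (Fin n → Bool) → ℝ) (k : ℕ) :
    l2norm (osc ((glauberOp (ising L))^[k] h)) ≤ glauberRate L ^ k * l2norm (osc h) := by
  induction k with
  | zero => simp
  | succ k ih =>
    rw [Function.iterate_succ_apply', pow_succ', mul_assoc]
    exact (l2norm_osc_glauberOp_le hL hLd hn _).trans
      (mul_le_mul_of_nonneg_left ih (glauberRate_nonneg L hn))

lemma tendsto_expect_iterate_glauberOp (hn : 0 < n) (hDob : specNorm (absMat L) < 1)
    {ν : (Fin n → Bool) → ℝ} (hν : ∀ x, 0 ≤ ν x) (hν1 : ∑ x, ν x = 1) (h : (Fin n → Bool) → ℝ) :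
    Tendsto (fun k => expect ν ((glauberOp (ising L))^[k] h)) atTop (𝓝 (expect (ising L) h)) := by
  have hgeom : Tendsto (fun k => √n * l2norm (osc h) * glauberRate L ^ k) atTop (𝓝 0) := by
    simpa using (tendsto_pow_atTop_nhds_zero_of_lt_one (glauberRate_nonneg L hn)
      (glauberRate_lt_one L hn hDob)).const_mul (√n * l2norm (osc h))
  rw [tendsto_iff_dist_tendsto_zero]
  refine squeeze_zero (fun _ => dist_nonneg) (fun k => ?_) hgeom
  rw [Real.dist_eq, ← expect_iterate_glauberOp (ising_pos L) hn h k]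
  calc _ ≤ ∑ i, osc ((glauberOp (ising L))^[k] h) i :=
        abs_expect_sub_expect_le_of_oscillation hν hν1 (fun x => (ising_pos L x).le) (sum_ising L)
          (abs_sub_le_sum_osc _)
    _ ≤ √n * l2norm (osc ((glauberOp (ising L))^[k] h)) := by
        simpa using sum_le_sqrt_card_mul_l2norm (osc ((glauberOp (ising L))^[k] h))
    _ ≤ √n * l2norm (osc h) * glauberRate L ^ k := by
        rw [mul_assoc, mul_comm (l2norm _)]
        gcongr
        exact l2norm_osc_iterate_glauberOp_le hL hLd hn h k

end Contraction

section Comparison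
variable {n : ℕ} {L M : Matrix (Fin n) (Fin n) ℝ} (hL : L.IsSymm) (hLd : ∀ i, L i i = 0)
  (hM : M.IsSymm) (hMd : ∀ i, M i i = 0)
include hL hLd hM hMd

lemma abs_glauberOp_sub_glauberOp_le (h : (Fin n → Bool) → ℝ) (x : Fin n → Bool) :
    |glauberOp (ising M) h x - glauberOp (ising L) h x|
      ≤ √n / (2 * n) * specNorm (L - M) * l2norm (osc h) := by
  have hterm : ∀ i, |(condProb (ising M) x i - condProb (ising L) x i) * disc i h x|
      ≤ 1 / 2 * (|((L - M) *ᵥ sigmaVec x) i| * osc h i) := by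
    intro i
    rw [abs_mul, abs_sub_comm]
    calc _ ≤ |((L - M) *ᵥ sigmaVec x) i| / 2 * osc h i :=
          mul_le_mul (abs_condProb_ising_sub_le hL hLd hM hMd x i) (abs_disc_le_osc h i x)
            (abs_nonneg _) (by positivity)
      _ = _ := by ring
  calc |glauberOp (ising M) h x - glauberOp (ising L) h x|
      = 1 / n * |∑ i, (condProb (ising M) x i - condProb (ising L) x i) * disc i h x| := by
        simp only [glauberOp_eq_sum_heatBath, ← mul_sub, ← Finset.sum_sub_distrib,
          heatBath_sub_heatBath, abs_mul]
        simp
    _ ≤ 1 / n * (1 / 2 * (l2norm ((L - M) *ᵥ sigmaVec x) * l2norm (osc h))) := by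
        gcongr
        refine (Finset.abs_sum_le_sum_abs _ _).trans
          ((Finset.sum_le_sum fun i _ => hterm i).trans ?_)
        rw [← Finset.mul_sum]
        gcongr
        exact sum_abs_mul_le_l2norm_mul _ _
    _ ≤ 1 / n * (1 / 2 * (specNorm (L - M) * √n * l2norm (osc h))) := by
        gcongr
        · exact l2norm_nonneg _
        · exact (l2norm_mulVec_le _ _).trans_eq (by rw [l2norm_sigmaVec])
    _ = √n / (2 * n) * specNorm (L - M) * l2norm (osc h) := by ring

lemma abs_expect_sub_expect_glauberOp_le (hn : 0 < n) (h : (Fin n → Bool) → ℝ) :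
    |expect (ising M) h - expect (ising M) (glauberOp (ising L) h)|
      ≤ √n / (2 * n) * specNorm (L - M) * l2norm (osc h) := by
  rw [← expect_glauberOp (ising_pos M) hn h]
  exact abs_expect_sub_expect_le (fun x => (ising_pos M x).le) (sum_ising M)
    (abs_glauberOp_sub_glauberOp_le hL hLd hM hMd h)

end Comparison

theorem stmt6_general {n : ℕ} (hn : 0 < n) (L M : Matrix (Fin n) (Fin n) ℝ)
    (hLsymm : L.IsSymm) (hLdiag : ∀ i, L i i = 0)
    (hMsymm : M.IsSymm) (hMdiag : ∀ i, M i i = 0)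
    (hDob : specNorm (absMat L) < 1)
    (a : Fin n → ℝ)
    (f : (Fin n → Bool) → ℝ)
    (hf : ∀ x y, |f x - f y| ≤ ∑ i, if x i = y i then 0 else a i) :
    |expect (ising L) f - expect (ising M) f|
      ≤ Real.sqrt (∑ i, (a i) ^ 2) * Real.sqrt n / (2 * (1 - specNorm (absMat L)))
          * specNorm (L - M) := by
  set P := glauberOp (ising L)
  have hosc : ∀ k, l2norm (osc (P^[k] f)) ≤ glauberRate L ^ k * l2norm a := fun k =>
    (l2norm_osc_iterate_glauberOp_le hLsymm hLdiag hn f k).trans <|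
      mul_le_mul_of_nonneg_left (l2norm_le_l2norm (osc_nonneg f) (osc_le_of_abs_sub_le hf))
        (pow_nonneg (glauberRate_nonneg L hn) k)
  have hstep : ∀ k, dist (expect (ising M) (P^[k] f)) (expect (ising M) (P^[k + 1] f))
      ≤ √n / (2 * n) * specNorm (L - M) * l2norm a * glauberRate L ^ k := fun k => by
    rw [Real.dist_eq, Function.iterate_succ_apply', mul_assoc _ (l2norm a), mul_comm (l2norm a)]
    exact (abs_expect_sub_expect_glauberOp_le hLsymm hLdiag hMsymm hMdiag hn _).trans
      (mul_le_mul_of_nonneg_left (hosc k) (mul_nonneg (by positivity) (norm_nonneg _)))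
  have hlim := tendsto_expect_iterate_glauberOp hLsymm hLdiag hn hDob
    (fun x => (ising_pos M x).le) (sum_ising M) f
  have hbound := dist_le_of_le_geometric_of_tendsto₀ (glauberRate L) _
    (glauberRate_lt_one L hn hDob) hstep hlim
  rw [Function.iterate_zero_apply, dist_comm, Real.dist_eq] at hbound
  refine hbound.trans_eq ?_
  have hgap : 1 - specNorm (absMat L) ≠ 0 := (sub_pos.2 hDob).ne'
  have hn' : (n : ℝ) ≠ 0 := Nat.cast_ne_zero.2 hn.ne'
  rw [glauberRate, sub_sub_cancel, l2norm_eq_sqrt]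
  field_simp

theorem stmt6 {n : ℕ} (hn : 0 < n) (L M : Matrix (Fin n) (Fin n) ℝ)
    (hLsymm : L.IsSymm) (hLdiag : ∀ i, L i i = 0)
    (hMsymm : M.IsSymm) (hMdiag : ∀ i, M i i = 0)
    (hDob : specNorm (absMat L) < 1)
    (a : Fin n → ℝ) (ha : ∀ i, 0 < a i)
    (f : (Fin n → Bool) → ℝ)
    (hf : ∀ x y, |f x - f y| ≤ ∑ i, if x i = y i then 0 else a i) :
    |expect (ising L) f - expect (ising M) f|
      ≤ Real.sqrt (∑ i, (a i) ^ 2) * Real.sqrt n / (2 * (1 - specNorm (absMat L)))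
          * specNorm (L - M) :=
  stmt6_general hn L M hLsymm hLdiag hMsymm hMdiag hDob a f hf
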